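/- Each F_i = Σ_{k≠i} |Φ_{i,k}|²/(a_i − a_k) + |z_i|² (with Φ_{i,k} and a_i as below, a_i pairwise distinct) is a first integral of the complex magnetic system z' = w, w' = −i s K w + μ z with μ = (is/2)(⟨Kw,z̄⟩ − ⟨z,Kw̄⟩) − ⟨w,w̄⟩, on the constraint set |z|² = 1, Re⟨w,z⟩ = 0. -/

import Mathlib

/-- The `(i,k)` entry of the magnetic momentum map `Φ_s^{u(ℓ)}`:
`Φ_{i,k} = (1/2)(wᵢ z̄ₖ − zᵢ w̄ₖ) + (is/4)(kᵢ + kₖ) zᵢ z̄ₖ`. -/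
noncomputable def phiEntry {ℓ : ℕ} (s : ℝ) (K : Fin ℓ → ℝ) (z w : Fin ℓ → ℂ)
    (i k : Fin ℓ) : ℂ :=
  (1 / 2 : ℂ) * (w i * (starRingEnd ℂ) (z k) - z i * (starRingEnd ℂ) (w k))
    + Complex.I * s / 4 * ((K i : ℂ) + (K k : ℂ)) * z i * (starRingEnd ℂ) (z k)

/-- Key per-term algebraic identity: the derivative of `|Φ_{i,k}|²/(aᵢ-aₖ)`
collapses to a simple bilinear expression. -/
lemma perterm_identity (s ki kk mu ai ak : ℝ) (zi zk wi wk : ℂ)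
    (hai : ai = s ^ 2 * ki ^ 2 / 16) (hak : ak = s ^ 2 * kk ^ 2 / 16)
    (hne : (ai : ℂ) - (ak : ℂ) ≠ 0) :
    (((1 / 2 : ℂ) * (((-(Complex.I * s * ki * wi) + mu * zi) * (starRingEnd ℂ) zk
          + wi * (starRingEnd ℂ) wk)
        - (wi * (starRingEnd ℂ) wk
          + zi * (starRingEnd ℂ) (-(Complex.I * s * kk * wk) + mu * zk)))
      + ((Complex.I * s / 4 * ((ki : ℂ) + (kk : ℂ)) * wi) * (starRingEnd ℂ) zk
        + (Complex.I * s / 4 * ((ki : ℂ) + (kk : ℂ)) * zi) * (starRingEnd ℂ) wk))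
        * (starRingEnd ℂ)
          ((1 / 2 : ℂ) * (wi * (starRingEnd ℂ) zk - zi * (starRingEnd ℂ) wk)
            + Complex.I * s / 4 * ((ki : ℂ) + (kk : ℂ)) * zi * (starRingEnd ℂ) zk)
      + ((1 / 2 : ℂ) * (wi * (starRingEnd ℂ) zk - zi * (starRingEnd ℂ) wk)
            + Complex.I * s / 4 * ((ki : ℂ) + (kk : ℂ)) * zi * (starRingEnd ℂ) zk)
        * (starRingEnd ℂ)
          ((1 / 2 : ℂ) * (((-(Complex.I * s * ki * wi) + mu * zi) * (starRingEnd ℂ) zk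
              + wi * (starRingEnd ℂ) wk)
            - (wi * (starRingEnd ℂ) wk
              + zi * (starRingEnd ℂ) (-(Complex.I * s * kk * wk) + mu * zk)))
          + ((Complex.I * s / 4 * ((ki : ℂ) + (kk : ℂ)) * wi) * (starRingEnd ℂ) zk
            + (Complex.I * s / 4 * ((ki : ℂ) + (kk : ℂ)) * zi) * (starRingEnd ℂ) wk)))
      / ((ai : ℂ) - (ak : ℂ))
    = -(((starRingEnd ℂ) wi * zi + wi * (starRingEnd ℂ) zi) * (zk * (starRingEnd ℂ) zk))
      + (wk * (starRingEnd ℂ) zk + (starRingEnd ℂ) wk * zk) * (zi * (starRingEnd ℂ) zi) := by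
  rw [div_eq_iff hne, hai, hak]
  push_cast
  simp only [map_add, map_sub, map_mul, map_neg, map_div₀, map_ofNat, map_one,
    Complex.conj_I, Complex.conj_ofReal, Complex.conj_conj]
  linear_combination ((s : ℂ) ^ 2 * ((ki : ℂ) ^ 2 - (kk : ℂ) ^ 2) / 16 *
      (zk * wi * (starRingEnd ℂ) zi * (starRingEnd ℂ) zk
        - zi * wk * (starRingEnd ℂ) zi * (starRingEnd ℂ) zk
        + zi * zk * (starRingEnd ℂ) zk * (starRingEnd ℂ) wi
        - zi * zk * (starRingEnd ℂ) zi * (starRingEnd ℂ) wk)) * Complex.I_sq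

/-- each `Fᵢ = Σ_{k≠i} |Φ_{i,k}|²/(aᵢ − aₖ) + |zᵢ|²` (with the
`aᵢ = s²kᵢ²/16` pairwise distinct) is a first integral of the complex magnetic
system `z' = w`, `w' = −isKw + μz`, `μ = (is/2)(⟨Kw,z̄⟩ − ⟨z,Kw̄⟩) − ⟨w,w̄⟩`,
on the constraint set `{|z|² = 1, Re⟨w,z⟩ = 0}`. -/
theorem quadratic_integrals_first_integrals
    (ℓ : ℕ) (z w : ℝ → Fin ℓ → ℂ) (K : Fin ℓ → ℝ) (s : ℝ)
    (a : Fin ℓ → ℝ) (ha : ∀ i, a i = s ^ 2 * (K i) ^ 2 / 16)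
    (hdist : Function.Injective a)
    (μ : ℝ → ℝ)
    (hμ : ∀ t, (μ t : ℂ) = Complex.I * s / 2 *
        ((∑ i, (K i : ℂ) * w t i * (starRingEnd ℂ) (z t i))
          - ∑ i, z t i * (K i : ℂ) * (starRingEnd ℂ) (w t i))
      - ∑ i, w t i * (starRingEnd ℂ) (w t i))
    (hz : ∀ i t, HasDerivAt (fun τ => z τ i) (w t i) t)
    (hw : ∀ i t, HasDerivAt (fun τ => w τ i)
      (-(Complex.I * s * K i * w t i) + μ t * z t i) t)
    (hnorm : ∀ t, ∑ i, Complex.normSq (z t i) = 1)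
    (hperp : ∀ t, ∑ i, (w t i * (starRingEnd ℂ) (z t i)
      + (starRingEnd ℂ) (w t i) * z t i) = 0) :
    ∀ i t, HasDerivAt (fun τ =>
      (∑ k ∈ Finset.univ \ {i},
        Complex.normSq (phiEntry s K (z τ) (w τ) i k) / (a i - a k))
      + Complex.normSq (z τ i)) 0 t := by
  intro i t
  classical
  -- conjugation of a differentiable complex curve
  have hstar : ∀ (f : ℝ → ℂ) (f' : ℂ), HasDerivAt f f' t →
      HasDerivAt (fun τ => (starRingEnd ℂ) (f τ)) ((starRingEnd ℂ) f') t := by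
    intro f f' hf
    simpa only [← Complex.star_def] using hf.star
  -- derivative of each entry of the momentum map
  have hΦ : ∀ k, HasDerivAt (fun τ => phiEntry s K (z τ) (w τ) i k)
      ((1 / 2 : ℂ) * (((-(Complex.I * s * K i * w t i) + μ t * z t i) * (starRingEnd ℂ) (z t k)
          + w t i * (starRingEnd ℂ) (w t k))
        - (w t i * (starRingEnd ℂ) (w t k)
          + z t i * (starRingEnd ℂ) (-(Complex.I * s * K k * w t k) + μ t * z t k)))
      + ((Complex.I * s / 4 * ((K i : ℂ) + (K k : ℂ)) * w t i) * (starRingEnd ℂ) (z t k)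
        + (Complex.I * s / 4 * ((K i : ℂ) + (K k : ℂ)) * z t i) * (starRingEnd ℂ) (w t k))) t := by
    intro k
    unfold phiEntry
    exact ((((hw i t).mul (hstar _ _ (hz k t))).sub
        ((hz i t).mul (hstar _ _ (hw k t)))).const_mul (1 / 2 : ℂ)).add
      (((hz i t).const_mul _).mul (hstar _ _ (hz k t)))
  -- derivative of the complexified integral
  have hG : HasDerivAt (fun τ =>
      (∑ k ∈ Finset.univ \ {i}, phiEntry s K (z τ) (w τ) i k
        * (starRingEnd ℂ) (phiEntry s K (z τ) (w τ) i k) / ((a i : ℂ) - (a k : ℂ)))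
      + z τ i * (starRingEnd ℂ) (z τ i)) 0 t := by
    have hterm := fun (k : Fin ℓ) (_ : k ∈ Finset.univ \ {i}) =>
      ((hΦ k).mul (hstar _ _ (hΦ k))).div_const ((a i : ℂ) - (a k : ℂ))
    have htot := (HasDerivAt.sum hterm).add ((hz i t).mul (hstar _ _ (hz i t)))
    have h0 : (∑ k ∈ Finset.univ \ {i},
        (((1 / 2 : ℂ) * (((-(Complex.I * s * K i * w t i) + μ t * z t i) * (starRingEnd ℂ) (z t k)
              + w t i * (starRingEnd ℂ) (w t k))
            - (w t i * (starRingEnd ℂ) (w t k)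
              + z t i * (starRingEnd ℂ) (-(Complex.I * s * K k * w t k) + μ t * z t k)))
          + ((Complex.I * s / 4 * ((K i : ℂ) + (K k : ℂ)) * w t i) * (starRingEnd ℂ) (z t k)
            + (Complex.I * s / 4 * ((K i : ℂ) + (K k : ℂ)) * z t i) * (starRingEnd ℂ) (w t k)))
          * (starRingEnd ℂ) (phiEntry s K (z t) (w t) i k)
        + phiEntry s K (z t) (w t) i k
          * (starRingEnd ℂ)
            ((1 / 2 : ℂ) * (((-(Complex.I * s * K i * w t i) + μ t * z t i) * (starRingEnd ℂ) (z t k)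
                + w t i * (starRingEnd ℂ) (w t k))
              - (w t i * (starRingEnd ℂ) (w t k)
                + z t i * (starRingEnd ℂ) (-(Complex.I * s * K k * w t k) + μ t * z t k)))
            + ((Complex.I * s / 4 * ((K i : ℂ) + (K k : ℂ)) * w t i) * (starRingEnd ℂ) (z t k)
              + (Complex.I * s / 4 * ((K i : ℂ) + (K k : ℂ)) * z t i) * (starRingEnd ℂ) (w t k))))
          / ((a i : ℂ) - (a k : ℂ)))
        + (w t i * (starRingEnd ℂ) (z t i) + z t i * (starRingEnd ℂ) (w t i)) = 0 := by
      have hper : ∀ k ∈ Finset.univ \ {i},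
          (((1 / 2 : ℂ) * (((-(Complex.I * s * K i * w t i) + μ t * z t i) * (starRingEnd ℂ) (z t k)
                + w t i * (starRingEnd ℂ) (w t k))
              - (w t i * (starRingEnd ℂ) (w t k)
                + z t i * (starRingEnd ℂ) (-(Complex.I * s * K k * w t k) + μ t * z t k)))
            + ((Complex.I * s / 4 * ((K i : ℂ) + (K k : ℂ)) * w t i) * (starRingEnd ℂ) (z t k)
              + (Complex.I * s / 4 * ((K i : ℂ) + (K k : ℂ)) * z t i) * (starRingEnd ℂ) (w t k)))
            * (starRingEnd ℂ) (phiEntry s K (z t) (w t) i k)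
          + phiEntry s K (z t) (w t) i k
            * (starRingEnd ℂ)
              ((1 / 2 : ℂ) * (((-(Complex.I * s * K i * w t i) + μ t * z t i) * (starRingEnd ℂ) (z t k)
                  + w t i * (starRingEnd ℂ) (w t k))
                - (w t i * (starRingEnd ℂ) (w t k)
                  + z t i * (starRingEnd ℂ) (-(Complex.I * s * K k * w t k) + μ t * z t k)))
              + ((Complex.I * s / 4 * ((K i : ℂ) + (K k : ℂ)) * w t i) * (starRingEnd ℂ) (z t k)
                + (Complex.I * s / 4 * ((K i : ℂ) + (K k : ℂ)) * z t i) * (starRingEnd ℂ) (w t k))))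
            / ((a i : ℂ) - (a k : ℂ))
          = -(((starRingEnd ℂ) (w t i) * z t i + w t i * (starRingEnd ℂ) (z t i))
              * (z t k * (starRingEnd ℂ) (z t k)))
            + (w t k * (starRingEnd ℂ) (z t k) + (starRingEnd ℂ) (w t k) * z t k)
              * (z t i * (starRingEnd ℂ) (z t i)) := by
        intro k hk
        have hki : k ≠ i := by simpa using (Finset.mem_sdiff.mp hk).2
        have hane : (a i : ℂ) - (a k : ℂ) ≠ 0 := by
          have : a i ≠ a k := fun h => hki (hdist h).symm
          exact sub_ne_zero.mpr (by exact_mod_cast this)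
        have := perterm_identity s (K i) (K k) (μ t) (a i) (a k)
          (z t i) (z t k) (w t i) (w t k) (ha i) (ha k) hane
        simpa only [phiEntry] using this
      rw [Finset.sum_congr rfl hper, Finset.sum_add_distrib, Finset.sum_neg_distrib,
        ← Finset.mul_sum, ← Finset.sum_mul]
      have S1 : ∑ k ∈ Finset.univ \ {i}, z t k * (starRingEnd ℂ) (z t k)
          = 1 - z t i * (starRingEnd ℂ) (z t i) := by
        rw [Finset.sum_sdiff_eq_sub (Finset.subset_univ {i}), Finset.sum_singleton]
        congr 1
        have : ∀ k, z t k * (starRingEnd ℂ) (z t k) = ((Complex.normSq (z t k) : ℝ) : ℂ) := by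
          intro k; exact Complex.mul_conj _
        simp_rw [this]
        rw [← Complex.ofReal_sum, hnorm t, Complex.ofReal_one]
      have S2 : ∑ k ∈ Finset.univ \ {i},
          (w t k * (starRingEnd ℂ) (z t k) + (starRingEnd ℂ) (w t k) * z t k)
          = -(w t i * (starRingEnd ℂ) (z t i) + (starRingEnd ℂ) (w t i) * z t i) := by
        rw [Finset.sum_sdiff_eq_sub (Finset.subset_univ {i}), hperp t, Finset.sum_singleton]
        ring
      rw [S1, S2]
      ring
    rw [h0] at htot
    refine htot.congr_of_eventuallyEq (Filter.Eventually.of_forall fun τ => ?_)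
    simp only [Finset.sum_apply, Pi.add_apply, Pi.mul_apply]
  -- the real-valued integral is the real part of the complexified one
  have hfun : (fun τ =>
      (∑ k ∈ Finset.univ \ {i},
        Complex.normSq (phiEntry s K (z τ) (w τ) i k) / (a i - a k))
      + Complex.normSq (z τ i))
      = fun τ => ((∑ k ∈ Finset.univ \ {i}, phiEntry s K (z τ) (w τ) i k
        * (starRingEnd ℂ) (phiEntry s K (z τ) (w τ) i k) / ((a i : ℂ) - (a k : ℂ)))
      + z τ i * (starRingEnd ℂ) (z τ i)).re := by
    funext τ
    have hval : (∑ k ∈ Finset.univ \ {i}, phiEntry s K (z τ) (w τ) i k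
        * (starRingEnd ℂ) (phiEntry s K (z τ) (w τ) i k) / ((a i : ℂ) - (a k : ℂ)))
      + z τ i * (starRingEnd ℂ) (z τ i)
      = (((∑ k ∈ Finset.univ \ {i},
          Complex.normSq (phiEntry s K (z τ) (w τ) i k) / (a i - a k))
        + Complex.normSq (z τ i) : ℝ) : ℂ) := by
      simp only [Complex.mul_conj]
      push_cast
      ring
    rw [hval, Complex.ofReal_re]
  rw [hfun]
  have := Complex.reCLM.hasFDerivAt.comp_hasDerivAt t hG
  simpa only [Function.comp_def, Complex.reCLM_apply, Complex.zero_re] using this
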